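/- arXiv:2502.16619 — 5 statements merged into one kernel-verified Lean document; each statement's English description precedes it below -/
import Mathlib

section
/- Let t be a monoidal t-structure on a nonzero monoidal triangulated category T with 0 ∈ dev(t). Then the heart H_t, equipped with the tensor product inherited from T, is a monoidal abelian category with unit object H^0_t(𝟙), and the tensor product on H_t is exact in each variable. -/
/-!
Closure of the heart under `⊗` is the condition `0 ∈ dev(t)` itself. An object `X` of the heart
has cohomology concentrated in degree `0`, with `H⁰X ≅ X`. Since the exact functors `- ⊗ W`,
`W ⊗ -` preserve zero objects, the Künneth product for `H⁰(𝟙 ⊗ X)` then has a single nonzero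
factor, so `H⁰(𝟙) ⊗ X ≅ H⁰(𝟙) ⊗ H⁰X ≅ H⁰(𝟙 ⊗ X) ≅ H⁰X ≅ X`, and symmetrically on the right.
-/

open CategoryTheory Category Limits Pretriangulated Triangulated MonoidalCategory

namespace Paper

variable (C : Type*) [Category C] [Preadditive C] [HasZeroObject C] [HasShift C ℤ]
  [∀ n : ℤ, (shiftFunctor C n).Additive] [Pretriangulated C]

/-- Truncation and cohomology data for a t-structure `t`: the truncation functors
`τ^{≤ n}`, `τ^{≥ n}` together with the natural maps `τ^{≤ n} X ⟶ X ⟶ τ^{≥ n+1} X`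
and the connecting maps forming distinguished truncation triangles. -/
structure TruncData (t : TStructure C) where
  τle : ℤ → C ⥤ C
  τge : ℤ → C ⥤ C
  τle_mem (n : ℤ) (X : C) : t.le n ((τle n).obj X)
  τge_mem (n : ℤ) (X : C) : t.ge n ((τge n).obj X)
  ι (n : ℤ) : τle n ⟶ 𝟭 C
  π (n : ℤ) : 𝟭 C ⟶ τge n
  δ (n : ℤ) (X : C) : (τge (n + 1)).obj X ⟶ ((τle n).obj X)⟦(1 : ℤ)⟧
  triangle_mem (n : ℤ) (X : C) :
    Triangle.mk ((ι n).app X) ((π (n + 1)).app X) (δ n X) ∈ distTriang C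

variable {C}

/-- The cohomological functor `H^n_t := Σ^n ∘ τ^{≤ n} ∘ τ^{≥ n}`, valued in the heart. -/
def TruncData.H {t : TStructure C} (d : TruncData C t) (n : ℤ) : C ⥤ C :=
  d.τge n ⋙ d.τle n ⋙ shiftFunctor C n

/-- The heart `D^{≤ 0} ∩ D^{≥ 0}` of a t-structure. -/
def Heart (t : TStructure C) (X : C) : Prop := t.le 0 X ∧ t.ge 0 X

/-- A t-structure is bounded if every object lies in some `D^{≤ b} ∩ D^{≥ a}`. -/
def IsBounded (t : TStructure C) : Prop := ∀ X : C, ∃ a b : ℤ, t.le b X ∧ t.ge a X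


section Monoidal

variable (C) [MonoidalCategory C]

/-- A monoidal triangulated category: the tensor product is exact in each variable,
with compatibility isomorphisms `Σ(X) ⊗ Y ≅ Σ(X ⊗ Y)` and `X ⊗ Σ(Y) ≅ Σ(X ⊗ Y)`. -/
class MonoidalTriangulated where
  shiftTensor (n : ℤ) (X Y : C) : ((X⟦n⟧) ⊗ Y) ≅ ((X ⊗ Y)⟦n⟧)
  tensorShift (n : ℤ) (X Y : C) : (X ⊗ (Y⟦n⟧)) ≅ ((X ⊗ Y)⟦n⟧)
  whiskerLeft_distinguished (X : C) (T : Triangle C) (hT : T ∈ distTriang C) :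
    Triangle.mk (X ◁ T.mor₁) (X ◁ T.mor₂)
      ((X ◁ T.mor₃) ≫ (tensorShift 1 X T.obj₁).hom) ∈ distTriang C
  whiskerRight_distinguished (Y : C) (T : Triangle C) (hT : T ∈ distTriang C) :
    Triangle.mk (T.mor₁ ▷ Y) (T.mor₂ ▷ Y)
      ((T.mor₃ ▷ Y) ≫ (shiftTensor 1 T.obj₁ Y).hom) ∈ distTriang C

/-- The deviation of the `k`-shifted t-structure `Σ^{-k} t = (D^{≤ k}, D^{≥ k+1})`:
the set of integers `n` with `D^{≤ k} ⊗ D^{≤ k+n} ⊆ D^{≤ k}` and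
`D^{≥ k} ⊗ D^{≥ k+n} ⊆ D^{≥ k}`.  The deviation of `t` itself is `dev C t 0`. -/
def dev (t : TStructure C) (k : ℤ) : Set ℤ :=
  {n | (∀ X Y : C, t.le k X → t.le (k + n) Y → t.le k (X ⊗ Y)) ∧
       (∀ X Y : C, t.ge k X → t.ge (k + n) Y → t.ge k (X ⊗ Y))}

variable {C}

/-- The Künneth formula: `H^n(X ⊗ Y)` is the (bi)product `⊕_{p+q=n} H^p(X) ⊗ H^q(Y)`
(all but finitely many summands are zero, so the product is the coproduct). -/
def Kunneth {t : TStructure C} (d : TruncData C t) : Prop :=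
  ∀ (n : ℤ) (X Y : C),
    ∃ p : ∀ q : ℤ, ((d.H n).obj (X ⊗ Y)) ⟶ (((d.H q).obj X) ⊗ ((d.H (n - q)).obj Y)),
      Nonempty (IsLimit (Fan.mk ((d.H n).obj (X ⊗ Y)) p))

variable (C) in
/-- A monoidal additive category is tensor reduced if `X ⊗ X = 0` implies `X = 0`. -/
def TensorReducedCat : Prop := ∀ X : C, IsZero (X ⊗ X) → IsZero X

/-- A monoidal t-structure is tensor reduced if its heart is: for `X` in the heart,
`X ⊗ X = 0` implies `X = 0`. -/
def TensorReduced (t : TStructure C) : Prop :=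
  ∀ X : C, Heart t X → IsZero (X ⊗ X) → IsZero X

end Monoidal

end Paper

open ZeroObject

namespace CategoryTheory.Limits.Fan

lemma isIso_proj_of_isZero {C : Type*} [Category C] [HasZeroMorphisms C] {ι : Type*}
    {f : ι → C} {c : Fan f} (hc : IsLimit c) (i : ι) (hf : ∀ j ≠ i, IsZero (f j)) :
    IsIso (c.proj i) := by
  classical
  let g : ∀ j, f i ⟶ f j := fun j => if h : i = j then eqToHom (congrArg f h) else 0
  have hg : ∀ j, hc.lift (Fan.mk (f i) g) ≫ c.proj j = g j := fun j => hc.fac _ ⟨j⟩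
  refine ⟨hc.lift (Fan.mk (f i) g), ?_, by simp [hg, g]⟩
  refine hc.hom_ext fun ⟨j⟩ => ?_
  by_cases hij : i = j
  · subst hij
    change (c.proj i ≫ _) ≫ c.proj i = 𝟙 _ ≫ c.proj i
    simp [hg, g]
  · exact (hf j (Ne.symm hij)).eq_of_tgt _ _

end CategoryTheory.Limits.Fan

namespace CategoryTheory.Triangulated.TStructure

variable {C : Type*} [Category C] [Preadditive C] [HasZeroObject C] [HasShift C ℤ]
  [∀ n : ℤ, (shiftFunctor C n).Additive] [Pretriangulated C] (t : TStructure C)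

lemma isZero_obj₃_of_mor₂_eq_zero {T : Triangle C} (hT : T ∈ distTriang C) (n : ℤ)
    (h₁ : t.le n T.obj₁) (h₃ : t.ge (n + 1) T.obj₃) (h₂ : T.mor₂ = 0) : IsZero T.obj₃ := by
  obtain ⟨g, hg⟩ := Triangle.yoneda_exact₃ T hT (𝟙 T.obj₃) (by rw [h₂, zero_comp])
  rw [IsZero.iff_id_eq_zero, hg, t.zero_of_isLE_of_isGE g (n - 1) (n + 1) (by omega)
    ⟨t.le_shift n 1 (n - 1) (by omega) _ h₁⟩ ⟨h₃⟩, comp_zero]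

lemma isZero_obj₁_of_mor₁_eq_zero {T : Triangle C} (hT : T ∈ distTriang C) (n : ℤ)
    (h₁ : t.le n T.obj₁) (h₃ : t.ge (n + 1) T.obj₃) (h₂ : T.mor₁ = 0) : IsZero T.obj₁ := by
  obtain ⟨g, hg⟩ := Triangle.coyoneda_exact₁ T hT (𝟙 (T.obj₁⟦(1 : ℤ)⟧))
    (by rw [h₂, Functor.map_zero, comp_zero])
  rw [IsZero.iff_id_eq_zero]
  apply (shiftFunctor C (1 : ℤ)).map_injective
  rw [Functor.map_id, Functor.map_zero, hg, t.zero_of_isLE_of_isGE g (n - 1) (n + 1)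
    (by omega) ⟨t.le_shift n 1 (n - 1) (by omega) _ h₁⟩ ⟨h₃⟩, zero_comp]

end CategoryTheory.Triangulated.TStructure

namespace Paper

variable {C : Type*} [Category C] [Preadditive C] [HasZeroObject C] [HasShift C ℤ]
  [∀ n : ℤ, (shiftFunctor C n).Additive] [Pretriangulated C] {t : TStructure C}

namespace TruncData

variable (d : TruncData C t)

lemma isZero_τge_obj_of_le {n m : ℤ} (hnm : n + 1 = m) {X : C} (hX : t.le n X) :
    IsZero ((d.τge m).obj X) := by
  subst hnm
  exact t.isZero_obj₃_of_mor₂_eq_zero (d.triangle_mem n X) n (d.τle_mem n X) (d.τge_mem _ X)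
    (t.zero_of_isLE_of_isGE _ n (n + 1) (by omega) ⟨hX⟩ ⟨d.τge_mem _ X⟩)

lemma isZero_τle_obj_of_ge {n m : ℤ} (hnm : n + 1 = m) {X : C} (hX : t.ge m X) :
    IsZero ((d.τle n).obj X) := by
  subst hnm
  exact t.isZero_obj₁_of_mor₁_eq_zero (d.triangle_mem n X) n (d.τle_mem n X) (d.τge_mem _ X)
    (t.zero_of_isLE_of_isGE _ n (n + 1) (by omega) ⟨d.τle_mem n X⟩ ⟨hX⟩)

lemma isIso_ι_app_of_le (n : ℤ) {X : C} (hX : t.le n X) : IsIso ((d.ι n).app X) :=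
  (Triangle.isZero₃_iff_isIso₁ _ (d.triangle_mem n X)).1 (d.isZero_τge_obj_of_le rfl hX)

lemma isIso_π_app_of_ge {n m : ℤ} (hnm : n + 1 = m) {X : C} (hX : t.ge m X) :
    IsIso ((d.π m).app X) := by
  subst hnm
  exact (Triangle.isZero₁_iff_isIso₂ _ (d.triangle_mem n X)).1 (d.isZero_τle_obj_of_ge rfl hX)

noncomputable def hZeroObjIsoOfHeart {X : C} (hX : Heart t X) : (d.H 0).obj X ≅ X :=
  have : IsIso ((d.π 0).app X) := d.isIso_π_app_of_ge (n := -1) (by norm_num) hX.2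
  have : IsIso ((d.ι 0).app ((d.τge 0).obj X)) :=
    d.isIso_ι_app_of_le 0 ((t.le 0).prop_of_iso (asIso ((d.π 0).app X)) hX.1)
  (shiftFunctorZero C ℤ).app _ ≪≫ asIso ((d.ι 0).app _) ≪≫ (asIso ((d.π 0).app X)).symm

lemma isZero_H_obj_of_heart {q : ℤ} (hq : q ≠ 0) {X : C} (hX : Heart t X) :
    IsZero ((d.H q).obj X) := by
  refine (shiftFunctor C q).map_isZero ?_
  rcases hq.lt_or_gt with hneg | hpos
  · have hX₁ : t.ge (q + 1) X := t.ge_antitone (by omega) X hX.2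
    have : IsIso ((d.π q).app X) :=
      d.isIso_π_app_of_ge (n := q - 1) (by omega) (t.ge_antitone (by omega) X hX₁)
    exact d.isZero_τle_obj_of_ge rfl ((t.ge (q + 1)).prop_of_iso (asIso ((d.π q).app X)) hX₁)
  · have hτge : IsZero ((d.τge q).obj X) :=
      d.isZero_τge_obj_of_le (n := q - 1) (by omega) (t.le_monotone (by omega) X hX.1)
    exact d.isZero_τle_obj_of_ge rfl (t.isGE_of_isZero hτge _).ge

end TruncData

section Monoidal

variable [MonoidalCategory C]

lemma heart_tensor_of_zero_mem_dev (h0 : (0 : ℤ) ∈ dev C t 0) {X Y : C} (hX : Heart t X) (hY : Heart t Y) :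
    Heart t (X ⊗ Y) :=
  ⟨h0.1 X Y hX.1 hY.1, h0.2 X Y hX.2 hY.2⟩

variable [MonoidalTriangulated C]

/- `⊗` is not assumed additive: whiskering the contractible triangle `Z ⟶ Z ⟶ 0 ⟶ Z⟦1⟧`
exhibits `W ⊗ 0` as a cone of an identity. -/
lemma isZero_tensor_of_isZero_right (W : C) {Z : C} (hZ : IsZero Z) : IsZero (W ⊗ Z) := by
  have hT := MonoidalTriangulated.whiskerLeft_distinguished W _ (contractible_distinguished Z)
  have h0 : IsZero (W ⊗ (0 : C)) := Triangle.isZero₃_of_isIso₁ _ hT (by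
    show IsIso (W ◁ 𝟙 Z)
    rw [whiskerLeft_id]
    infer_instance)
  exact h0.of_iso (whiskerLeftIso W hZ.isoZero)

lemma isZero_tensor_of_isZero_left (W : C) {Z : C} (hZ : IsZero Z) : IsZero (Z ⊗ W) := by
  have hT := MonoidalTriangulated.whiskerRight_distinguished W _ (contractible_distinguished Z)
  have h0 : IsZero ((0 : C) ⊗ W) := Triangle.isZero₃_of_isIso₁ _ hT (by
    show IsIso (𝟙 Z ▷ W)
    rw [id_whiskerRight]
    infer_instance)
  exact h0.of_iso (whiskerRightIso hZ.isoZero W)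

namespace Kunneth

variable {d : TruncData C t}

lemma nonempty_tensor_H_zero_iso (hd : Kunneth d) (n : ℤ) (X : C) {Y : C}
    (hY : ∀ q ≠ 0, IsZero ((d.H q).obj Y)) :
    Nonempty ((d.H n).obj X ⊗ (d.H 0).obj Y ≅ (d.H n).obj (X ⊗ Y)) := by
  obtain ⟨p, ⟨hp⟩⟩ := hd n X Y
  have : IsIso (p n) := Fan.isIso_proj_of_isZero hp n fun q hq =>
    isZero_tensor_of_isZero_right _ (hY _ (sub_ne_zero.2 hq.symm))
  exact ⟨whiskerLeftIso _ (eqToIso (by rw [sub_self])) ≪≫ (asIso (p n)).symm⟩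

lemma nonempty_H_zero_tensor_iso (hd : Kunneth d) (n : ℤ) {X : C} (Y : C)
    (hX : ∀ q ≠ 0, IsZero ((d.H q).obj X)) :
    Nonempty ((d.H 0).obj X ⊗ (d.H n).obj Y ≅ (d.H n).obj (X ⊗ Y)) := by
  obtain ⟨p, ⟨hp⟩⟩ := hd n X Y
  have : IsIso (p 0) := Fan.isIso_proj_of_isZero hp 0 fun q hq =>
    isZero_tensor_of_isZero_left _ (hX q hq)
  exact ⟨whiskerLeftIso _ (eqToIso (by rw [sub_zero])) ≪≫ (asIso (p 0)).symm⟩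

end Kunneth

end Monoidal

/-- If `t` is a monoidal t-structure with `0` in its deviation on a nonzero monoidal
triangulated category, then the heart is closed under the tensor product (hence is a
monoidal abelian category with the inherited tensor product), with unit object
`H^0(𝟙)`. -/
theorem statement3 {C : Type*} [Category C] [Preadditive C] [HasZeroObject C] [HasShift C ℤ]
    [∀ n : ℤ, (shiftFunctor C n).Additive] [Pretriangulated C] [MonoidalCategory C]
    [MonoidalTriangulated C] (hC : ∃ X : C, ¬ IsZero X)
    (t : TStructure C) (ht : IsBounded t) (d : TruncData C t) (hd : Kunneth d)
    (h0 : (0 : ℤ) ∈ dev C t 0) :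
    (∀ X Y : C, Heart t X → Heart t Y → Heart t (X ⊗ Y)) ∧
    (∀ X : C, Heart t X →
      Nonempty ((((d.H 0).obj (𝟙_ C)) ⊗ X) ≅ X) ∧
      Nonempty ((X ⊗ ((d.H 0).obj (𝟙_ C))) ≅ X)) := by
  refine ⟨fun X Y => heart_tensor_of_zero_mem_dev h0, fun X hX => ?_⟩
  have hX' : ∀ q ≠ 0, IsZero ((d.H q).obj X) := fun q hq => d.isZero_H_obj_of_heart hq hX
  obtain ⟨eL⟩ := hd.nonempty_tensor_H_zero_iso 0 (𝟙_ C) hX'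
  obtain ⟨eR⟩ := hd.nonempty_H_zero_tensor_iso 0 (𝟙_ C) hX'
  let eX := d.hZeroObjIsoOfHeart hX
  exact ⟨⟨whiskerLeftIso _ eX.symm ≪≫ eL ≪≫ (d.H 0).mapIso (λ_ X) ≪≫ eX⟩,
    ⟨whiskerRightIso eX.symm _ ≪≫ eR ≪≫ (d.H 0).mapIso (ρ_ X) ≪≫ eX⟩⟩

end Paper
end

section
/- Let t be a monoidal t-structure on a nonzero monoidal triangulated category T with 0 ∈ dev(t). Then dev(t) = {0}; that is, 0 is the unique integer n satisfying D^{≤0} ⊗ D^{≤n} ⊆ D^{≤0} and D^{≥0} ⊗ D^{≥n} ⊆ D^{≥0}. -/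
/-!
If some `n ≠ 0` lies in the deviation alongside `0`, then for `u`, `v` in the heart
the object `u ⊗ v` lies in `D^{≤ 0} ∩ D^{≥ -n}` (or in `D^{≤ -n} ∩ D^{≥ 0}`), so it
vanishes. By the Künneth formula every cohomology object `H^m(𝟙 ⊗ X) ≅ H^m(X)` is then
a product of zero objects, and an object of a bounded t-structure with vanishing
cohomology is zero: if `X ∈ D^{≤ b}`, the vanishing of `H^b(X)` pushes `X` into
`D^{≤ b-1}`, until `X ∈ D^{≤ b} ∩ D^{≥ a}` with `b < a`. So every object is zero,
contradicting that `T` is nonzero.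
-/

open CategoryTheory Category Limits Pretriangulated Triangulated MonoidalCategory

namespace Paper

variable (C : Type*) [Category C] [Preadditive C] [HasZeroObject C] [HasShift C ℤ]
  [∀ n : ℤ, (shiftFunctor C n).Additive] [Pretriangulated C]

variable {C}

section TStructure

variable {C : Type*} [Category C] [Preadditive C] [HasZeroObject C] [HasShift C ℤ]
  [∀ n : ℤ, (shiftFunctor C n).Additive] [Pretriangulated C] {t : TStructure C}

namespace TruncData

variable (d : TruncData C t)

lemma ge_τle_obj {q : ℤ} {Y : C} (hY : t.ge q Y) : t.ge q ((d.τle q).obj Y) := by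
  have hT := inv_rot_of_distTriang _ (d.triangle_mem q Y)
  have h₁ : t.ge q (((d.τge (q + 1)).obj Y)⟦(-1 : ℤ)⟧) :=
    t.ge_antitone (by lia) _ (t.ge_shift (q + 1) (-1) (q + 2) (by lia) _ (d.τge_mem _ Y))
  exact (t.isGE₂ _ hT q ⟨h₁⟩ ⟨hY⟩).ge

lemma heart_H (q : ℤ) (X : C) : Heart t ((d.H q).obj X) :=
  ⟨t.le_shift q q 0 (by lia) _ (d.τle_mem q _),
    t.ge_shift q q 0 (by lia) _ (d.ge_τle_obj (d.τge_mem q X))⟩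

lemma le_of_le_succ_of_isZero_H {b : ℤ} {X : C} (hX : t.le (b + 1) X)
    (hH : IsZero ((d.H (b + 1)).obj X)) : t.le b X := by
  set W := (d.τge (b + 1)).obj X
  have hW_le : t.IsLE W (b + 1) := by
    have h₃ : t.le (b + 1) (((d.τle b).obj X)⟦(1 : ℤ)⟧) :=
      t.le_monotone (by lia) _ (t.le_shift b 1 (b - 1) (by lia) _ (d.τle_mem b X))
    exact t.isLE₂ _ (rot_of_distTriang _ (d.triangle_mem b X)) _ ⟨hX⟩ ⟨h₃⟩
  have hW_ge : t.IsGE W (b + 1 + 1) := by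
    have h₁ : IsZero ((d.τle (b + 1)).obj W) :=
      IsZero.of_full_of_faithful_of_isZero (shiftFunctor C (b + 1)) _ hH
    exact t.isGE₂ _ (d.triangle_mem (b + 1) W) _ (t.isGE_of_isZero h₁ _) ⟨d.τge_mem _ W⟩
  have hW : IsZero W := t.isZero W (b + 1) (b + 1 + 1)
  exact (t.isLE₂ _ (d.triangle_mem b X) _ ⟨d.τle_mem b X⟩ (t.isLE_of_isZero hW _)).le

lemma isZero_of_forall_isZero_H (ht : IsBounded t) {X : C}
    (hH : ∀ m, IsZero ((d.H m).obj X)) : IsZero X := by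
  obtain ⟨a, b, hb, ha⟩ := ht X
  have hle : ∀ c ≤ b, t.le c X := by
    intro c hc
    induction c, hc using Int.leInductionDown with
    | base => exact hb
    | pred c _ ih =>
      rw [← sub_add_cancel c 1] at ih
      exact d.le_of_le_succ_of_isZero_H ih (by rw [sub_add_cancel]; exact hH c)
  have : t.IsLE X (min b (a - 1)) := ⟨hle _ (min_le_left _ _)⟩
  have : t.IsGE X a := ⟨ha⟩
  exact t.isZero X (min b (a - 1)) a

end TruncData

end TStructure

section Monoidal

variable {C : Type*} [Category C] [Preadditive C] [HasZeroObject C] [HasShift C ℤ]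
  [∀ n : ℤ, (shiftFunctor C n).Additive] [Pretriangulated C] [MonoidalCategory C]
  {t : TStructure C}

lemma TruncData.isZero_H_tensor {d : TruncData C t} (hd : Kunneth d)
    (h : ∀ u v : C, Heart t u → Heart t v → IsZero (u ⊗ v)) (m : ℤ) (X Y : C) :
    IsZero ((d.H m).obj (X ⊗ Y)) := by
  obtain ⟨p, ⟨hlim⟩⟩ := hd m X Y
  rw [IsZero.iff_id_eq_zero]
  exact hlim.hom_ext fun q ↦ (h _ _ (d.heart_H _ X) (d.heart_H _ Y)).eq_of_tgt _ _

variable [MonoidalTriangulated C]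

lemma le_tensor_of_mem_dev {n : ℤ} (hn : n ∈ dev C t 0) {u v : C} (hu : t.le 0 u)
    (hv : t.le 0 v) : t.le (-n) (u ⊗ v) := by
  have h : t.le 0 (u ⊗ v⟦-n⟧) := hn.1 u _ hu (t.le_shift 0 (-n) (0 + n) (by lia) v hv)
  have : t.IsLE ((u ⊗ v)⟦-n⟧) 0 :=
    ⟨(t.le 0).prop_of_iso (MonoidalTriangulated.tensorShift _ u v) h⟩
  exact (t.isLE_of_shift (u ⊗ v) (-n) (-n) 0).le

lemma ge_tensor_of_mem_dev {n : ℤ} (hn : n ∈ dev C t 0) {u v : C} (hu : t.ge 0 u)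
    (hv : t.ge 0 v) : t.ge (-n) (u ⊗ v) := by
  have h : t.ge 0 (u ⊗ v⟦-n⟧) := hn.2 u _ hu (t.ge_shift 0 (-n) (0 + n) (by lia) v hv)
  have : t.IsGE ((u ⊗ v)⟦-n⟧) 0 :=
    ⟨(t.ge 0).prop_of_iso (MonoidalTriangulated.tensorShift _ u v) h⟩
  exact (t.isGE_of_shift (u ⊗ v) (-n) (-n) 0).ge

lemma isZero_tensor_of_heart {n : ℤ} (h0 : 0 ∈ dev C t 0) (hn : n ∈ dev C t 0) (hn0 : n ≠ 0)
    {u v : C} (hu : Heart t u) (hv : Heart t v) : IsZero (u ⊗ v) := by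
  have : t.IsLE (u ⊗ v) 0 := by simpa using le_tensor_of_mem_dev h0 hu.1 hv.1
  have : t.IsGE (u ⊗ v) 0 := by simpa using ge_tensor_of_mem_dev h0 hu.2 hv.2
  have : t.IsLE (u ⊗ v) (-n) := ⟨le_tensor_of_mem_dev hn hu.1 hv.1⟩
  have : t.IsGE (u ⊗ v) (-n) := ⟨ge_tensor_of_mem_dev hn hu.2 hv.2⟩
  rcases hn0.lt_or_gt with hneg | hpos
  · exact t.isZero (u ⊗ v) 0 (-n)
  · exact t.isZero (u ⊗ v) (-n) 0

end Monoidal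

/-- If `t` is a monoidal t-structure on a nonzero monoidal triangulated category with
`0` in its deviation, then its deviation is exactly `{0}`. -/
theorem statement4 {C : Type*} [Category C] [Preadditive C] [HasZeroObject C] [HasShift C ℤ]
    [∀ n : ℤ, (shiftFunctor C n).Additive] [Pretriangulated C] [MonoidalCategory C]
    [MonoidalTriangulated C] (hC : ∃ X : C, ¬ IsZero X)
    (t : TStructure C) (ht : IsBounded t) (d : TruncData C t) (hd : Kunneth d)
    (h0 : (0 : ℤ) ∈ dev C t 0) :
    dev C t 0 = {0} := by
  refine Set.Subset.antisymm (fun n hn ↦ ?_) (Set.singleton_subset_iff.2 h0)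
  by_contra hn0
  obtain ⟨X, hX⟩ := hC
  refine hX (d.isZero_of_forall_isZero_H ht fun m ↦ ?_)
  have hunitX := d.isZero_H_tensor hd (fun _ _ ↦ isZero_tensor_of_heart h0 hn hn0) m (𝟙_ C) X
  exact hunitX.of_iso ((d.H m).mapIso (λ_ X)).symm

end Paper
end

section
/- Let t be a tensor reduced monoidal t-structure on a monoidal triangulated category T. If X ∈ D^{≤m} with H^m_t(X) ≠ 0 then X ⊗ X ∈ D^{≤2m} with H^{2m}_t(X ⊗ X) ≠ 0; dually, if Y ∈ D^{≥n} with H^n_t(Y) ≠ 0 then Y ⊗ Y ∈ D^{≥2n} with H^{2n}_t(Y ⊗ Y) ≠ 0. -/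
/-!
By Künneth, `H^m(X) ⊗ H^m(X)` is a retract of `H^{2m}(X ⊗ X)`; since `H^m(X)` lies in the heart,
tensor reducedness makes it nonzero. The amplitude bounds follow by shifting
`D^{≤ 0} ⊗ D^{≤ 0} ⊆ D^{≤ 0}` (resp. `≥`) through the compatibility `X[a] ⊗ Y[b] ≅ (X ⊗ Y)[a + b]`.
-/

open CategoryTheory Category Limits Pretriangulated Triangulated MonoidalCategory

namespace Paper

variable (C : Type*) [Category C] [Preadditive C] [HasZeroObject C] [HasShift C ℤ]
  [∀ n : ℤ, (shiftFunctor C n).Additive] [Pretriangulated C]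

variable {C}

lemma isZero_of_isLimit_fan {C : Type*} [Category C] [HasZeroMorphisms C] {β : Type*}
    {F : β → C} {c : Fan F} (hc : IsLimit c) (hpt : IsZero c.pt) (b : β) : IsZero (F b) := by
  classical
  have h := Fan.IsLimit.fac hc (Pi.single b (𝟙 (F b))) b
  rw [Pi.single_eq_same, hpt.eq_of_src (c.proj b) 0, comp_zero] at h
  exact (IsZero.iff_id_eq_zero _).2 h.symm

section

variable {C : Type*} [Category C] [Preadditive C] [HasZeroObject C] [HasShift C ℤ]
  [∀ n : ℤ, (shiftFunctor C n).Additive] [Pretriangulated C]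

lemma TruncData.heart_H_s7 {t : TStructure C} (d : TruncData C t) (k : ℤ) (X : C) :
    Heart t ((d.H k).obj X) := by
  let Z := (d.τge k).obj X
  have hge : t.ge k ((d.τle k).obj Z) := by
    -- `τ^{≤ k} Z` is an extension of `Z ∈ D^{≥ k}` by `(τ^{≥ k+1} Z)[-1] ∈ D^{≥ k+2}`.
    have h₁ : t.ge k (((d.τge (k + 1)).obj Z)⟦(-1 : ℤ)⟧) :=
      t.ge_antitone (by omega) _ (t.ge_shift (k + 1) (-1) (k + 2) (by ring) _ (d.τge_mem _ Z))
    rw [t.ge_iff_isGE] at h₁ ⊢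
    exact t.isGE₂ _ (inv_rot_of_distTriang _ (d.triangle_mem k Z)) k h₁
      ((t.ge_iff_isGE _ _).1 (d.τge_mem k X))
  exact ⟨t.le_shift k k 0 (add_zero k) _ (d.τle_mem k Z), t.ge_shift k k 0 (add_zero k) _ hge⟩

variable [MonoidalCategory C]

lemma Kunneth.isZero_tensor_H_of_isZero {t : TStructure C} {d : TruncData C t} (hd : Kunneth d)
    {n : ℤ} {X Y : C} (h : IsZero ((d.H n).obj (X ⊗ Y))) (q : ℤ) :
    IsZero ((d.H q).obj X ⊗ (d.H (n - q)).obj Y) := by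
  obtain ⟨_, ⟨hp⟩⟩ := hd n X Y
  exact isZero_of_isLimit_fan hp h q

lemma Kunneth.not_isZero_H_two_mul_tensor_self {t : TStructure C} {d : TruncData C t}
    (hd : Kunneth d) (hred : TensorReduced t) {m : ℤ} {X : C}
    (hXm : ¬ IsZero ((d.H m).obj X)) : ¬ IsZero ((d.H (2 * m)).obj (X ⊗ X)) := by
  intro h
  have hm := hd.isZero_tensor_H_of_isZero h m
  rw [show 2 * m - m = m by ring] at hm
  exact hXm (hred _ (d.heart_H_s7 m X) hm)

def shiftTensorShiftIso [MonoidalTriangulated C] (a b : ℤ) (X Y : C) :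
    (X⟦a⟧) ⊗ (Y⟦b⟧) ≅ (X ⊗ Y)⟦a + b⟧ :=
  MonoidalTriangulated.shiftTensor a X (Y⟦b⟧) ≪≫
    (shiftFunctor C a).mapIso (MonoidalTriangulated.tensorShift b X Y) ≪≫
    ((shiftFunctorAdd' C b a (a + b) (add_comm b a)).app (X ⊗ Y)).symm

variable [MonoidalTriangulated C] {t : TStructure C}

lemma le_add_tensor_of_zero_mem_dev (h0 : (0 : ℤ) ∈ dev C t 0) {a b : ℤ} {X Y : C}
    (hX : t.le a X) (hY : t.le b Y) : t.le (a + b) (X ⊗ Y) := by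
  rw [← t.shift_le (a + b) 0 (a + b) (add_zero _), ObjectProperty.prop_shift_iff]
  exact (t.le 0).prop_of_iso (shiftTensorShiftIso a b X Y)
    (h0.1 _ _ (t.le_shift a a 0 (add_zero a) X hX) (t.le_shift b b 0 (add_zero b) Y hY))

lemma ge_add_tensor_of_zero_mem_dev (h0 : (0 : ℤ) ∈ dev C t 0) {a b : ℤ} {X Y : C}
    (hX : t.ge a X) (hY : t.ge b Y) : t.ge (a + b) (X ⊗ Y) := by
  rw [← t.shift_ge (a + b) 0 (a + b) (add_zero _), ObjectProperty.prop_shift_iff]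
  exact (t.ge 0).prop_of_iso (shiftTensorShiftIso a b X Y)
    (h0.2 _ _ (t.ge_shift a a 0 (add_zero a) X hX) (t.ge_shift b b 0 (add_zero b) Y hY))

end

/-- For a tensor reduced monoidal t-structure: if `X ∈ D^{≤ m}` with `H^m(X) ≠ 0` then
`X ⊗ X ∈ D^{≤ 2m}` with `H^{2m}(X ⊗ X) ≠ 0`; dually, if `Y ∈ D^{≥ n}` with
`H^n(Y) ≠ 0` then `Y ⊗ Y ∈ D^{≥ 2n}` with `H^{2n}(Y ⊗ Y) ≠ 0`. -/
theorem statement7 {C : Type*} [Category C] [Preadditive C] [HasZeroObject C] [HasShift C ℤ]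
    [∀ n : ℤ, (shiftFunctor C n).Additive] [Pretriangulated C] [MonoidalCategory C]
    [MonoidalTriangulated C]
    (t : TStructure C) (ht : IsBounded t) (d : TruncData C t) (hd : Kunneth d)
    (h0 : (0 : ℤ) ∈ dev C t 0) (hred : TensorReduced t)
    (m n : ℤ) (X Y : C)
    (hX : t.le m X) (hXm : ¬ IsZero ((d.H m).obj X))
    (hY : t.ge n Y) (hYn : ¬ IsZero ((d.H n).obj Y)) :
    (t.le (2 * m) (X ⊗ X) ∧ ¬ IsZero ((d.H (2 * m)).obj (X ⊗ X))) ∧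
    (t.ge (2 * n) (Y ⊗ Y) ∧ ¬ IsZero ((d.H (2 * n)).obj (Y ⊗ Y))) := by
  refine ⟨⟨?_, hd.not_isZero_H_two_mul_tensor_self hred hXm⟩,
    ⟨?_, hd.not_isZero_H_two_mul_tensor_self hred hYn⟩⟩
  · rw [two_mul]
    exact le_add_tensor_of_zero_mem_dev h0 hX hX
  · rw [two_mul]
    exact ge_add_tensor_of_zero_mem_dev h0 hY hY

end Paper
end

section
/- Let t be a monoidal t-structure on a monoidal triangulated category T with 0 ∈ dev(t). Then T is tensor reduced (as a monoidal additive category) if and only if t is tensor reduced (i.e. its heart is tensor reduced). Consequently, if T admits one tensor reduced monoidal t-structure, then every monoidal t-structure on T with 0 in its deviation is tensor reduced. -/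
open CategoryTheory Category Limits Pretriangulated Triangulated MonoidalCategory

namespace Paper

variable (C : Type*) [Category C] [Preadditive C] [HasZeroObject C] [HasShift C ℤ]
  [∀ n : ℤ, (shiftFunctor C n).Additive] [Pretriangulated C]

variable {C}

/-! By Künneth in degree `2n`, `H^n(X) ⊗ H^n(X)` is a factor of `H^{2n}(X ⊗ X)`. So if
`X ⊗ X = 0` and the heart is tensor reduced, every `H^n(X)` vanishes, and a bounded object
with vanishing cohomology is zero (peel off the top cohomology by descending induction).
The converse holds because the heart is a full subcategory, and the final claim follows since
tensor reducedness of `T` does not refer to any t-structure. -/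

namespace TruncData

variable {t : TStructure C} (d : TruncData C t)

instance isLE_τle_obj (n : ℤ) (X : C) : t.IsLE ((d.τle n).obj X) n := ⟨d.τle_mem n X⟩

instance isGE_τge_obj (n : ℤ) (X : C) : t.IsGE ((d.τge n).obj X) n := ⟨d.τge_mem n X⟩

lemma isGE_τle_obj (X : C) (m n : ℤ) (h : m ≤ n + 2) [t.IsGE X m] :
    t.IsGE ((d.τle n).obj X) m := by
  have : t.IsGE (((d.τge (n + 1)).obj X)⟦(-1 : ℤ)⟧) m :=
    have := t.isGE_shift ((d.τge (n + 1)).obj X) (n + 1) (-1) (n + 2)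
    t.isGE_of_ge _ m (n + 2)
  exact t.isGE₂ _ (inv_rot_of_distTriang _ (d.triangle_mem n X)) m ‹_› ‹_›

lemma isLE_τge_obj (X : C) (m n : ℤ) (h : n - 1 ≤ m) [t.IsLE X m] :
    t.IsLE ((d.τge (n + 1)).obj X) m := by
  have : t.IsLE (((d.τle n).obj X)⟦(1 : ℤ)⟧) m :=
    have := t.isLE_shift ((d.τle n).obj X) n 1 (n - 1)
    t.isLE_of_le _ (n - 1) m
  exact t.isLE₂ _ (rot_of_distTriang _ (d.triangle_mem n X)) m ‹_› ‹_›

lemma isZero_τge_obj (X : C) (n : ℤ) [t.IsLE X n] : IsZero ((d.τge (n + 1)).obj X) :=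
  have := d.isLE_τge_obj X n n (by omega)
  t.isZero _ n (n + 1)

lemma isZero_τle_obj (X : C) (n : ℤ) [t.IsGE X (n + 1)] : IsZero ((d.τle n).obj X) :=
  have := d.isGE_τle_obj X (n + 1) n (by omega)
  t.isZero _ n (n + 1)

lemma isIso_ι_app (X : C) (n : ℤ) [t.IsLE X n] : IsIso ((d.ι n).app X) :=
  (Triangle.isZero₃_iff_isIso₁ _ (d.triangle_mem n X)).1 (d.isZero_τge_obj X n)

lemma heart_H_obj (X : C) (n : ℤ) : Heart t ((d.H n).obj X) := by
  have := d.isGE_τle_obj ((d.τge n).obj X) n n (by omega)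
  exact ⟨t.le_shift n n 0 (by omega) _ (t.le_of_isLE _ n),
    t.ge_shift n n 0 (by omega) _ (t.ge_of_isGE _ n)⟩

lemma isZero_H_obj_of_isZero {X : C} (hX : IsZero X) (n : ℤ) : IsZero ((d.H n).obj X) := by
  obtain ⟨m, rfl⟩ : ∃ m, n = m + 1 := ⟨n - 1, by omega⟩
  have := t.isLE_of_isZero hX m
  have := t.isGE_of_isZero (d.isZero_τge_obj X m) (m + 1 + 1)
  exact (shiftFunctor C (m + 1)).map_isZero (d.isZero_τle_obj _ (m + 1))

lemma isLE_of_isZero_H_obj (X : C) (n : ℤ) [t.IsLE X (n + 1)]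
    (hH : IsZero ((d.H (n + 1)).obj X)) : t.IsLE X n := by
  have := d.isLE_τge_obj X (n + 1) n (by omega)
  have := d.isIso_ι_app ((d.τge (n + 1)).obj X) (n + 1)
  have hτleτge : IsZero ((d.τle (n + 1)).obj ((d.τge (n + 1)).obj X)) :=
    ((shiftFunctor C (-(n + 1))).map_isZero hH).of_iso ((shiftEquiv C (n + 1)).unitIso.app _)
  have hτge : IsZero ((d.τge (n + 1)).obj X) :=
    hτleτge.of_iso (asIso ((d.ι (n + 1)).app _)).symm
  have : IsIso ((d.ι n).app X) := (Triangle.isZero₃_iff_isIso₁ _ (d.triangle_mem n X)).1 hτge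
  exact t.isLE_of_iso (asIso ((d.ι n).app X)) n

lemma isZero_of_forall_isZero_H_obj (X : C) (a b : ℤ) [t.IsGE X a] [t.IsLE X b]
    (hH : ∀ n, IsZero ((d.H n).obj X)) : IsZero X := by
  have hle : ∀ k : ℕ, t.IsLE X (b - k) := by
    intro k
    induction k with
    | zero => simpa
    | succ k ih =>
      have : t.IsLE X (b - (k + 1) + 1) := by rwa [show b - (k + 1) + 1 = b - k by omega]
      simpa using d.isLE_of_isZero_H_obj X (b - (k + 1)) (hH _)
  have := hle (b - a + 1).toNat
  exact t.isZero X (b - (b - a + 1).toNat) a (by omega)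

end TruncData

lemma isZero_of_isLimit_fan_of_isZero {D : Type*} [Category D] [HasZeroMorphisms D]
    {β : Type*} {A : β → D} {P : D} {p : ∀ i, P ⟶ A i} (hl : IsLimit (Fan.mk P p))
    (hP : IsZero P) (i : β) : IsZero (A i) := by
  classical
  let s : Fan A := Fan.mk (A i) (Pi.single i (𝟙 _))
  have : IsSplitEpi (p i) := IsSplitEpi.mk' ⟨hl.lift s, by simpa [s] using hl.fac s ⟨i⟩⟩
  exact hP.of_epi (p i)

section Monoidal

variable [MonoidalCategory C] {t : TStructure C} {d : TruncData C t}

lemma Kunneth.isZero_H_obj_tensor_of_isZero_tensor (hd : Kunneth d) {X Y : C}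
    (hXY : IsZero (X ⊗ Y)) (p q : ℤ) : IsZero ((d.H p).obj X ⊗ (d.H q).obj Y) := by
  obtain ⟨pr, ⟨hl⟩⟩ := hd (p + q) X Y
  simpa using isZero_of_isLimit_fan_of_isZero hl (d.isZero_H_obj_of_isZero hXY _) p

lemma TensorReducedCat.tensorReduced (h : TensorReducedCat C) (t : TStructure C) :
    TensorReduced t :=
  fun X _ => h X

lemma TensorReduced.tensorReducedCat (ht : IsBounded t) (hd : Kunneth d)
    (hred : TensorReduced t) : TensorReducedCat C := by
  intro X hXX
  obtain ⟨a, b, hb, ha⟩ := ht X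
  have : t.IsGE X a := ⟨ha⟩
  have : t.IsLE X b := ⟨hb⟩
  refine d.isZero_of_forall_isZero_H_obj X a b fun n => ?_
  exact hred _ (d.heart_H_obj X n) (hd.isZero_H_obj_tensor_of_isZero_tensor hXX n n)

end Monoidal

/-- For a monoidal t-structure `t` with `0` in its deviation, the ambient monoidal
triangulated category is tensor reduced iff `t` is tensor reduced.  Consequently, if
some tensor reduced monoidal t-structure exists, then every monoidal t-structure with
`0` in its deviation is tensor reduced. -/
theorem statement8 {C : Type*} [Category C] [Preadditive C] [HasZeroObject C] [HasShift C ℤ]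
    [∀ n : ℤ, (shiftFunctor C n).Additive] [Pretriangulated C] [MonoidalCategory C]
    [MonoidalTriangulated C]
    (t : TStructure C) (ht : IsBounded t) (d : TruncData C t) (hd : Kunneth d)
    (h0 : (0 : ℤ) ∈ dev C t 0) :
    (TensorReducedCat C ↔ TensorReduced t) ∧
    (TensorReduced t →
      ∀ (t' : TStructure C) (d' : TruncData C t'), IsBounded t' → Kunneth d' →
        (0 : ℤ) ∈ dev C t' 0 → TensorReduced t') := by
  have hiff : TensorReducedCat C ↔ TensorReduced t :=
    ⟨fun h => h.tensorReduced t, fun h => h.tensorReducedCat ht hd⟩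
  exact ⟨hiff, fun h t' _ _ _ _ => (hiff.2 h).tensorReduced t'⟩

end Paper
end

section
/- Every finite tensor category A is tensor reduced: for any object X of A, X ⊗ X = 0 implies X = 0. -/
open CategoryTheory Category Limits MonoidalCategory

namespace Paper

/-- The data and properties making a `k`-linear monoidal abelian category `A` a finite
tensor category: rigidity, a bilinear biexact tensor product, `End(𝟙) ≅ k`, simplicity
of the unit, finite length of all objects, and finitely many simple objects up to
isomorphism. -/
structure FiniteTensorData (k : Type*) [Field k] (A : Type*) [Category A] [Abelian A]
    [Linear k A] [MonoidalCategory A] where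
  rigid : RigidCategory A
  monoidalPreadditive : MonoidalPreadditive A
  monoidalLinear : letI := monoidalPreadditive; MonoidalLinear k A
  tensorLeft_lexact : ∀ X : A, PreservesFiniteLimits (tensorLeft X)
  tensorLeft_rexact : ∀ X : A, PreservesFiniteColimits (tensorLeft X)
  tensorRight_lexact : ∀ X : A, PreservesFiniteLimits (tensorRight X)
  tensorRight_rexact : ∀ X : A, PreservesFiniteColimits (tensorRight X)
  end_unit : ∀ f : 𝟙_ A ⟶ 𝟙_ A, ∃ c : k, f = c • 𝟙 (𝟙_ A)
  unit_simple : Simple (𝟙_ A)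
  noetherian : ∀ X : A, IsNoetherianObject X
  artinian : ∀ X : A, IsArtinianObject X
  finitelyManySimples : ∃ (ι : Type) (_ : Finite ι) (S : ι → A),
    (∀ i, Simple (S i)) ∧ ∀ X : A, Simple X → ∃ i, Nonempty (X ≅ S i)

/-- A predicate on objects defines a Serre subcategory if it is closed under
subobjects, quotients and extensions. -/
def IsSerre (A : Type*) [Category A] [Abelian A] (P : A → Prop) : Prop :=
  (∀ ⦃X Y : A⦄ (f : X ⟶ Y), Mono f → P Y → P X) ∧
  (∀ ⦃X Y : A⦄ (f : X ⟶ Y), Epi f → P X → P Y) ∧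
  (∀ S : ShortComplex A, S.ShortExact → P S.X₁ → P S.X₃ → P S.X₂)

/-! If `X ≠ 0`, choose a simple subobject `S ↪ X`. In a rigid category `- ⊗ X` has adjoints on
both sides, so it preserves monos and epis; hence `S ⊗ X ↪ X ⊗ X = 0`. Since the unit is simple
and `S ≠ 0`, the evaluation `Sᘁ ⊗ S ⟶ 𝟙` is nonzero, hence epi, so `X ≅ 𝟙 ⊗ X` is a quotient of
`Sᘁ ⊗ S ⊗ X = 0`. -/

section Rigid

variable {C : Type*} [Category C] [MonoidalCategory C]

theorem evaluation_ne_zero [Preadditive C] [MonoidalPreadditive C] {X Y : C} [ExactPairing X Y]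
    (hX : ¬IsZero X) : ε_ X Y ≠ 0 := by
  intro hε
  apply hX
  rw [IsZero.iff_id_eq_zero]
  have zigzag := ExactPairing.evaluation_coevaluation X Y
  rw [hε, MonoidalPreadditive.whiskerLeft_zero, comp_zero, comp_zero] at zigzag
  simpa using congrArg (fun f => (λ_ X).inv ≫ f ≫ (ρ_ X).hom) zigzag.symm

instance tensorRight_preservesEpimorphisms (X : C) [HasRightDual X] :
    (tensorRight X).PreservesEpimorphisms :=
  Functor.preservesEpimorphisms_of_adjunction (tensorRightAdjunction X Xᘁ)

instance tensorRight_preservesMonomorphisms (X : C) [HasLeftDual X] :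
    (tensorRight X).PreservesMonomorphisms :=
  Functor.preservesMonomorphisms_of_adjunction (tensorRightAdjunction (ᘁX) X)

variable [Abelian C] [MonoidalPreadditive C] [Simple (𝟙_ C)]

theorem isZero_right_of_isZero_tensor {S Z : C} [HasRightDual S] [HasRightDual Z]
    (hS : ¬IsZero S) (hSZ : IsZero (S ⊗ Z)) : IsZero Z := by
  have : Epi (ε_ S Sᘁ) := epi_of_nonzero_to_simple (evaluation_ne_zero hS)
  have hSSZ : IsZero ((Sᘁ ⊗ S) ⊗ Z) :=
    ((tensorLeft Sᘁ).map_isZero hSZ).of_iso (α_ Sᘁ S Z)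
  exact (IsZero.of_epi ((tensorRight Z).map (ε_ S Sᘁ)) hSSZ).of_iso (λ_ Z).symm

theorem isZero_of_isZero_tensor_self [RigidCategory C] {X : C} [IsArtinianObject X]
    (hXX : IsZero (X ⊗ X)) : IsZero X := by
  by_contra hX
  have hSX : IsZero (simpleSubobject hX ⊗ X) :=
    IsZero.of_mono ((tensorRight X).map (simpleSubobjectArrow hX)) hXX
  exact hX (isZero_right_of_isZero_tensor (Simple.not_isZero _) hSX)

end Rigid

/-- Every finite tensor category is tensor reduced: `X ⊗ X = 0` implies `X = 0`. -/
theorem statement14 {k : Type*} [Field k] {A : Type*} [Category A] [Abelian A]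
    [Linear k A] [MonoidalCategory A] (hA : FiniteTensorData k A) :
    ∀ X : A, IsZero (X ⊗ X) → IsZero X := by
  let := hA.rigid
  let := hA.monoidalPreadditive
  have := hA.unit_simple
  intro X
  have := hA.artinian X
  exact isZero_of_isZero_tensor_self

end Paper
end
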